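/- Let γ ∈ (0, 1). There exists θ₀ ∈ (π/2, π) such that for every θ ∈ (π/2, θ₀) there is a constant c > 0, independent of τ and z, with the property: for every time step τ > 0 and every z ∈ D(τ,θ) one has |δ_τ(e^{−zτ})^{2−γ} ρ₁(e^{−zτ}) τ² − z^{−γ}| ≤ c τ² |z|^{2−γ}, where δ_τ is the BDF2 generating symbol and ρ₁(ξ) = ξ/(1−ξ)². -/

import Mathlib

open Complex Set

/-- The BDF2 generating symbol `δ_τ(ξ) = τ⁻¹(3/2 − 2ξ + ξ²/2)`. -/
noncomputable def bdf2 (τ : ℝ) (ξ : ℂ) : ℂ :=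
  (τ : ℂ)⁻¹ * (3 / 2 - 2 * ξ + ξ ^ 2 / 2)

/-- The region `D(τ,θ)`: nonzero `z` with either `|arg z| = θ` and `|Im z| ≤ π/τ`,
or `|z| ≤ 1/τ` and `|arg z| ≤ θ`. -/
def Dset (τ θ : ℝ) : Set ℂ :=
  {z : ℂ | z ≠ 0 ∧
    ((|z.arg| = θ ∧ |z.im| ≤ Real.pi / τ) ∨ (‖z‖ ≤ 1 / τ ∧ |z.arg| ≤ θ))}

/-- Closed form of the generating function `Σ_{n≥1} n ξⁿ`. -/
noncomputable def rho1 (ξ : ℂ) : ℂ := ξ / (1 - ξ) ^ 2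

/-!
Put `w = zτ`. Then `δ_τ(e^{-zτ}) = τ⁻¹ F(w)` with `F(w) = δ_1(e^{-w})`, and
`ρ₁(e^{-w}) = (2 sinh(w/2))⁻²`, so the error is `τ^γ E(w)` with
`E(w) = F(w)^{2-γ} ρ₁(e^{-w}) - w^{-γ}`, and it suffices to bound `|E(w)| ≤ c|w|^{2-γ}` on `D(1,θ)`.

Near `0`, both `F(w)` and `2 sinh(w/2)` are `w + O(w³)`. Writing `F(w) = wA` and
`u = w / (2 sinh(w/2))`, both `A` and `u` are `1 + O(w²)`, and
`E(w) = w^{-γ}(A^{2-γ}u² - 1)`; the splitting `(wA)^{2-γ} = w^{2-γ}A^{2-γ}` of principal powers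
is valid because `|arg A| ≤ π/6` and `|arg w| < 3π/4`, which is where `θ₀ = 3π/4` comes from.
Away from `0`, the part of `D(1,θ)` with `|w| ≥ 1/4` is compact and `e^{-w} ≠ 1` on it, so `E` is
bounded there.
-/

open scoped Real

theorem norm_mul_sub_one_le {R : Type*} [SeminormedRing R] (a b : R) :
    ‖a * b - 1‖ ≤ ‖a - 1‖ * ‖b - 1‖ + ‖a - 1‖ + ‖b - 1‖ := by
  have h : a * b - 1 = (a - 1) * (b - 1) + (a - 1) + (b - 1) := by noncomm_ring
  rw [h]
  exact (norm_add₃_le).trans (by gcongr; exact norm_mul_le _ _)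

theorem norm_div_sub_one_le {𝕜 : Type*} [NormedField 𝕜] {w S : 𝕜} {ε : ℝ}
    (hw : w ≠ 0) (hS : ‖S - w‖ ≤ ε * ‖w‖) (hε : ε ≤ 1 / 2) : ‖w / S - 1‖ ≤ 2 * ε := by
  have hw' : 0 < ‖w‖ := norm_pos_iff.2 hw
  have hSw : ‖w‖ / 2 ≤ ‖S‖ := by
    have := norm_sub_norm_le w (w - S)
    rw [sub_sub_cancel, norm_sub_rev] at this
    nlinarith
  have hS0 : S ≠ 0 := norm_pos_iff.1 (by linarith)
  rw [div_sub_one hS0, norm_div, div_le_iff₀ (by linarith), norm_sub_rev]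
  nlinarith [norm_nonneg (S - w)]

namespace Complex

theorem ofReal_mul_cpow {r : ℝ} (hr : 0 ≤ r) (x s : ℂ) :
    ((r : ℂ) * x) ^ s = (r : ℂ) ^ s * x ^ s := by
  rcases hr.eq_or_lt with rfl | hr
  · rcases eq_or_ne s 0 with rfl | hs
    · simp
    · simp [zero_cpow hs]
  rcases eq_or_ne x 0 with rfl | hx
  · rcases eq_or_ne s 0 with rfl | hs
    · simp
    · simp [zero_cpow hs]
  have hr' : (r : ℂ) ≠ 0 := ofReal_ne_zero.mpr hr.ne'
  rw [cpow_def_of_ne_zero (mul_ne_zero hr' hx), log_ofReal_mul hr hx, add_mul, exp_add,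
    cpow_def_of_ne_zero hr', cpow_def_of_ne_zero hx, ofReal_log hr.le]

theorem mul_cpow_of_arg_add_mem {x y : ℂ} (hx : x ≠ 0) (hy : y ≠ 0)
    (h : x.arg + y.arg ∈ Ioc (-π) π) (s : ℂ) : (x * y) ^ s = x ^ s * y ^ s := by
  rw [cpow_def_of_ne_zero (mul_ne_zero hx hy), log_mul hx hy h, add_mul, exp_add,
    cpow_def_of_ne_zero hx, cpow_def_of_ne_zero hy]

theorem abs_arg_le_pi_div_six_of_norm_sub_one_le {A : ℂ} (h : ‖A - 1‖ ≤ 1 / 2) :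
    |A.arg| ≤ π / 6 := by
  have hsq : (A.re - 1) ^ 2 + A.im ^ 2 ≤ 1 / 4 := by
    have := pow_le_pow_left₀ (norm_nonneg _) h 2
    rw [← normSq_eq_norm_sq, normSq_apply] at this
    simp only [sub_re, one_re, sub_im, one_im, sub_zero] at this
    nlinarith
  have hre : 0 < A.re := by nlinarith [sq_nonneg A.im]
  have hA : 0 < ‖A‖ := (hre.trans_le (re_le_norm A))
  have hratio : |A.im / ‖A‖| ≤ 1 / 2 := by
    rw [abs_div, abs_norm, div_le_iff₀ hA]
    have h2 : ‖A‖ ^ 2 = A.re ^ 2 + A.im ^ 2 := by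
      rw [← normSq_eq_norm_sq, normSq_apply]; ring
    nlinarith [sq_abs A.im, abs_nonneg A.im, sq_nonneg (2 * A.re - 3 / 2)]
  have h6 : Real.arcsin (1 / 2) = π / 6 := by
    rw [← Real.sin_pi_div_six, Real.arcsin_sin] <;> linarith [Real.pi_pos]
  rw [arg_of_re_nonneg hre.le, abs_le, neg_le, ← Real.arcsin_neg, ← h6]
  obtain ⟨h1, h2⟩ := abs_le.1 hratio
  exact ⟨Real.arcsin_le_arcsin (by linarith), Real.arcsin_le_arcsin h2⟩

theorem norm_cpow_sub_one_le {A s : ℂ} (hA : ‖A - 1‖ ≤ 1 / 2) (hs : ‖s‖ * ‖A - 1‖ ≤ 2 / 3) :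
    ‖A ^ s - 1‖ ≤ 3 * ‖s‖ * ‖A - 1‖ := by
  have hA0 : A ≠ 0 := by
    rintro rfl
    norm_num at hA
  have hlog : ‖log A‖ ≤ 3 / 2 * ‖A - 1‖ := by
    simpa using norm_log_one_add_half_le_self hA
  have hls : ‖log A * s‖ ≤ 3 / 2 * (‖s‖ * ‖A - 1‖) := by
    rw [norm_mul]; nlinarith [norm_nonneg s]
  rw [cpow_def_of_ne_zero hA0]
  calc ‖exp (log A * s) - 1‖ ≤ 2 * ‖log A * s‖ := norm_exp_sub_one_le (by linarith)
    _ ≤ 3 * ‖s‖ * ‖A - 1‖ := by linarith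

theorem norm_cpow_neg_ofReal (w : ℂ) (γ : ℝ) : ‖w ^ (-(γ : ℂ))‖ = ‖w‖ ^ (-γ) := by
  rw [← ofReal_neg, norm_cpow_real]

theorem norm_exp_sub_quadratic_le {x : ℂ} (hx : ‖x‖ ≤ 1) :
    ‖exp x - (1 + x + x ^ 2 / 2)‖ ≤ 2 / 9 * ‖x‖ ^ 3 := by
  have := exp_bound hx (n := 3) (by norm_num)
  simp only [Finset.sum_range_succ, Finset.sum_range_zero, Nat.factorial] at this
  norm_num at this
  linarith

theorem exp_ne_one_of_abs_im_lt {w : ℂ} (hw : w ≠ 0) (him : |w.im| < 2 * π) : exp w ≠ 1 := by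
  rw [Ne, exp_eq_one_iff]
  rintro ⟨n, rfl⟩
  have hn : n ≠ 0 := by rintro rfl; simp at hw
  have : (1 : ℝ) ≤ |(n : ℝ)| := by exact_mod_cast Int.one_le_abs hn
  simp [abs_mul, abs_of_pos Real.pi_pos] at him
  nlinarith [Real.pi_pos]

theorem continuousOn_abs_arg : ContinuousOn (fun w : ℂ => |w.arg|) {0}ᶜ := by
  refine ContinuousOn.congr (f := fun w : ℂ => InnerProductGeometry.angle w 1) ?_
    fun w hw => (angle_one_right hw).symm
  intro w hw
  exact (ContinuousAt.comp (g := fun p : ℂ × ℂ => InnerProductGeometry.angle p.1 p.2)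
    (f := fun y : ℂ => (y, (1 : ℂ)))
    (InnerProductGeometry.continuousAt_angle (x := (w, 1)) hw one_ne_zero)
    (by fun_prop)).continuousWithinAt

end Complex

theorem bdf2_eq_inv_mul_bdf2_one (τ : ℝ) (ξ : ℂ) : bdf2 τ ξ = ((τ⁻¹ : ℝ) : ℂ) * bdf2 1 ξ := by
  simp [bdf2]

theorem norm_bdf2_one_exp_neg_sub_self_le {w : ℂ} (hw : ‖w‖ ≤ 1 / 2) :
    ‖bdf2 1 (exp (-w)) - w‖ ≤ 4 / 3 * ‖w‖ ^ 3 := by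
  have h1 := norm_exp_sub_quadratic_le (x := -w) (by rw [norm_neg]; linarith)
  have h2 := norm_exp_sub_quadratic_le (x := -(2 * w))
    (by simp only [norm_neg, norm_mul]; norm_num; linarith)
  have hsq : exp (-w) ^ 2 = exp (-(2 * w)) := by rw [← exp_nat_mul]; ring_nf
  have key : bdf2 1 (exp (-w)) - w =
      -2 * (exp (-w) - (1 + -w + (-w) ^ 2 / 2)) +
        (exp (-(2 * w)) - (1 + -(2 * w) + (-(2 * w)) ^ 2 / 2)) / 2 := by
    rw [bdf2, hsq]; push_cast; ring
  rw [key]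
  refine (norm_add_le _ _).trans ?_
  simp only [norm_mul, norm_neg] at h1 h2 ⊢
  norm_num at h1 h2 ⊢
  nlinarith [norm_nonneg w]

theorem norm_two_mul_sinh_half_sub_self_le {w : ℂ} (hw : ‖w‖ ≤ 2) :
    ‖2 * sinh (w / 2) - w‖ ≤ ‖w‖ ^ 3 / 18 := by
  have hw2 : ‖w / 2‖ = ‖w‖ / 2 := by simp
  have h1 := norm_exp_sub_quadratic_le (x := w / 2) (by rw [hw2]; linarith)
  have h2 := norm_exp_sub_quadratic_le (x := -(w / 2)) (by rw [norm_neg, hw2]; linarith)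
  rw [norm_neg, hw2] at h2
  rw [hw2] at h1
  have key : 2 * sinh (w / 2) - w =
      (exp (w / 2) - (1 + w / 2 + (w / 2) ^ 2 / 2)) -
        (exp (-(w / 2)) - (1 + -(w / 2) + (-(w / 2)) ^ 2 / 2)) := by
    rw [two_sinh]; ring
  rw [key]
  calc _ ≤ _ := norm_sub_le _ _
    _ ≤ 2 / 9 * (‖w‖ / 2) ^ 3 + 2 / 9 * (‖w‖ / 2) ^ 3 := add_le_add h1 h2
    _ = ‖w‖ ^ 3 / 18 := by ring

theorem rho1_exp_neg (w : ℂ) : rho1 (exp (-w)) = ((2 * sinh (w / 2)) ^ 2)⁻¹ := by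
  have hS : 2 * sinh (w / 2) = exp (w / 2) * (1 - exp (-w)) := by
    rw [two_sinh, mul_sub, mul_one, ← exp_add]; ring_nf
  have hsq : exp (w / 2) ^ 2 = exp w := by rw [← exp_nat_mul]; ring_nf
  rw [rho1, hS, mul_pow, hsq, mul_inv, exp_neg, div_eq_mul_inv, mul_comm]

noncomputable def bdf2Error (γ : ℝ) (w : ℂ) : ℂ :=
  bdf2 1 (exp (-w)) ^ ((2 - γ : ℝ) : ℂ) * rho1 (exp (-w)) - w ^ (-(γ : ℂ))

theorem norm_bdf2Error_le_of_norm_le {γ : ℝ} (hγ : γ ∈ Icc 0 4) {w : ℂ} (hw0 : w ≠ 0)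
    (hw : ‖w‖ ≤ 1 / 4) (harg : |w.arg| < 3 * π / 4) :
    ‖bdf2Error γ w‖ ≤ 9 * ‖w‖ ^ (2 - γ) := by
  set x := ‖w‖
  have hx : 0 < x := norm_pos_iff.2 hw0
  have hx2 : x ^ 2 ≤ 1 / 16 := by nlinarith
  set s : ℂ := ((2 - γ : ℝ) : ℂ)
  have hs : ‖s‖ ≤ 2 := by
    rw [norm_real, Real.norm_eq_abs, abs_le]; constructor <;> linarith [hγ.1, hγ.2]
  set A := bdf2 1 (exp (-w)) / w
  set u := w / (2 * sinh (w / 2))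
  have hA : ‖A - 1‖ ≤ 4 / 3 * x ^ 2 := by
    rw [div_sub_one hw0, norm_div, div_le_iff₀ hx]
    calc _ ≤ 4 / 3 * x ^ 3 := norm_bdf2_one_exp_neg_sub_self_le (by linarith)
      _ = _ := by ring
  have hA' : ‖A - 1‖ ≤ 1 / 12 := hA.trans (by nlinarith)
  have hAs : ‖A ^ s - 1‖ ≤ 8 * x ^ 2 := by
    refine (norm_cpow_sub_one_le (hA'.trans (by norm_num)) ?_).trans ?_
    · nlinarith [norm_nonneg s, norm_nonneg (A - 1)]
    · nlinarith [norm_nonneg s, norm_nonneg (A - 1)]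
  have hu : ‖u - 1‖ ≤ x ^ 2 / 9 := by
    have := norm_div_sub_one_le (ε := x ^ 2 / 18) hw0
      ((norm_two_mul_sinh_half_sub_self_le (by linarith)).trans_eq (by ring)) (by nlinarith)
    linarith
  have hu2 : ‖u ^ 2 - 1‖ ≤ x ^ 2 / 4 := by
    rw [sq]
    calc _ ≤ ‖u - 1‖ * ‖u - 1‖ + ‖u - 1‖ + ‖u - 1‖ := norm_mul_sub_one_le u u
      _ ≤ x ^ 2 / 9 * (x ^ 2 / 9) + x ^ 2 / 9 + x ^ 2 / 9 := by gcongr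
      _ ≤ x ^ 2 / 4 := by nlinarith [sq_nonneg x]
  have hsplit : bdf2 1 (exp (-w)) ^ s = w ^ s * A ^ s := by
    have hA0 : A ≠ 0 := by rintro h; rw [h] at hA'; norm_num at hA'
    have hargA := abs_arg_le_pi_div_six_of_norm_sub_one_le (hA'.trans (by norm_num))
    rw [← mul_cpow_of_arg_add_mem hw0 hA0 ?_, mul_div_cancel₀ _ hw0]
    constructor <;> linarith [abs_lt.1 harg, abs_le.1 hargA]
  have hE : bdf2Error γ w = w ^ (-(γ : ℂ)) * (A ^ s * u ^ 2 - 1) := by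
    have hs2 : s = -(γ : ℂ) + 2 := by simp only [s]; push_cast; ring
    rw [bdf2Error, hsplit, rho1_exp_neg, hs2, cpow_add _ _ hw0, cpow_ofNat]
    simp only [u, div_eq_mul_inv]
    ring
  have hprod : ‖A ^ s * u ^ 2 - 1‖ ≤ 9 * x ^ 2 := by
    calc _ ≤ ‖A ^ s - 1‖ * ‖u ^ 2 - 1‖ + ‖A ^ s - 1‖ + ‖u ^ 2 - 1‖ := norm_mul_sub_one_le _ _
      _ ≤ 8 * x ^ 2 * (x ^ 2 / 4) + 8 * x ^ 2 + x ^ 2 / 4 := by gcongr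
      _ ≤ 9 * x ^ 2 := by nlinarith [sq_nonneg x]
  rw [hE, norm_mul, norm_cpow_neg_ofReal]
  calc x ^ (-γ) * ‖A ^ s * u ^ 2 - 1‖ ≤ x ^ (-γ) * (9 * x ^ 2) := by gcongr
    _ = 9 * x ^ (2 - γ) := by
      rw [sub_eq_neg_add, Real.rpow_add hx, Real.rpow_two]; ring

theorem abs_im_le_pi_of_mem_Dset_one {θ : ℝ} {w : ℂ} (hw : w ∈ Dset 1 θ) : |w.im| ≤ π := by
  rcases hw.2 with ⟨-, him⟩ | ⟨hnorm, -⟩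
  · simpa using him
  · linarith [abs_im_le_norm w, Real.pi_gt_three, (div_one (1 : ℝ)) ▸ hnorm]

theorem exp_neg_ne_one_of_mem_Dset_one {θ : ℝ} {w : ℂ} (hw : w ∈ Dset 1 θ) : exp (-w) ≠ 1 :=
  exp_ne_one_of_abs_im_lt (neg_ne_zero.2 hw.1) (by
    rw [neg_im, abs_neg]; linarith [abs_im_le_pi_of_mem_Dset_one hw, Real.pi_pos])

theorem norm_le_of_mem_Dset_one {θ : ℝ} (hθ : θ ∈ Ioo 0 π) {w : ℂ} (hw : w ∈ Dset 1 θ) :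
    ‖w‖ ≤ max 1 (π / Real.sin θ) := by
  have hsin : 0 < Real.sin θ := Real.sin_pos_of_pos_of_lt_pi hθ.1 hθ.2
  rcases hw.2 with ⟨harg, him⟩ | ⟨hnorm, -⟩
  · have : ‖w‖ * Real.sin θ = |w.im| := by
      rw [← harg, ← Real.abs_sin_eq_sin_abs_of_abs_le_pi (abs_arg_le_pi w), sin_arg, abs_div,
        abs_norm, mul_div_cancel₀ _ (norm_pos_iff.2 hw.1).ne']
    refine le_max_of_le_right ((le_div_iff₀ hsin).2 ?_)
    rw [this]; simpa using him
  · exact le_max_of_le_left (by simpa using hnorm)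

theorem isCompact_Dset_one_inter {θ r : ℝ} (hθ : θ ∈ Ioo 0 π) (hr : 0 < r) :
    IsCompact (Dset 1 θ ∩ {w | r ≤ ‖w‖}) := by
  have hT : IsClosed {w : ℂ | r ≤ ‖w‖} := isClosed_le continuous_const continuous_norm
  have hf : ContinuousOn (fun w : ℂ => (|w.arg|, w)) {w | r ≤ ‖w‖} :=
    (continuousOn_abs_arg.mono fun w hw => norm_pos_iff.1 (hr.trans_le hw)).prodMk
      continuousOn_id
  have ht : IsClosed {p : ℝ × ℂ | (p.1 = θ ∧ |p.2.im| ≤ π) ∨ (‖p.2‖ ≤ 1 ∧ p.1 ≤ θ)} :=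
    ((isClosed_eq continuous_fst continuous_const).inter
      (isClosed_le (f := fun p : ℝ × ℂ => |p.2.im|) (by fun_prop) continuous_const)).union
      ((isClosed_le (f := fun p : ℝ × ℂ => ‖p.2‖) (by fun_prop) continuous_const).inter
        (isClosed_le continuous_fst continuous_const))
  have hclosed : IsClosed (Dset 1 θ ∩ {w | r ≤ ‖w‖}) := by
    convert hf.preimage_isClosed_of_isClosed hT ht using 1
    ext w
    simp only [Dset, div_one, mem_inter_iff, mem_ofPred_eq, mem_preimage]
    constructor
    · exact fun ⟨⟨_, h⟩, hw⟩ => ⟨hw, h⟩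
    · exact fun ⟨hw, h⟩ => ⟨⟨norm_pos_iff.1 (hr.trans_le hw), h⟩, hw⟩
  exact Metric.isCompact_of_isClosed_isBounded hclosed
    ((Metric.isBounded_closedBall (x := 0)).subset fun w hw => by
      rw [Metric.mem_closedBall, dist_zero_right]; exact norm_le_of_mem_Dset_one hθ hw.1)

theorem norm_bdf2Error_le (γ : ℝ) (w : ℂ) :
    ‖bdf2Error γ w‖ ≤
      ‖bdf2 1 (exp (-w))‖ ^ (2 - γ) * ‖rho1 (exp (-w))‖ + ‖w‖ ^ (-γ) := by
  refine (norm_sub_le _ _).trans_eq ?_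
  rw [norm_mul, norm_cpow_real, norm_cpow_neg_ofReal]

theorem exists_norm_bdf2Error_le_of_le_norm {γ θ r : ℝ} (hγ : γ ≤ 2) (hθ : θ ∈ Ioo 0 π)
    (hr : 0 < r) : ∃ M, ∀ w ∈ Dset 1 θ, r ≤ ‖w‖ → ‖bdf2Error γ w‖ ≤ M := by
  set K := Dset 1 θ ∩ {w | r ≤ ‖w‖}
  have hρ : ContinuousOn (fun w => rho1 (exp (-w))) K :=
    ContinuousOn.div (by fun_prop) (by fun_prop) fun w hw =>
      pow_ne_zero 2 (sub_ne_zero.2 (exp_neg_ne_one_of_mem_Dset_one hw.1).symm)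
  have hφ : ContinuousOn
      (fun w => ‖bdf2 1 (exp (-w))‖ ^ (2 - γ) * ‖rho1 (exp (-w))‖ + ‖w‖ ^ (-γ)) K := by
    refine ((ContinuousOn.rpow_const (by unfold bdf2; fun_prop) fun _ _ => Or.inr (by linarith)).mul
      hρ.norm).add (continuous_norm.continuousOn.rpow_const fun w hw => Or.inl ?_)
    exact (hr.trans_le hw.2).ne'
  obtain ⟨M, hM⟩ := (isCompact_Dset_one_inter hθ hr).exists_bound_of_continuousOn hφ
  exact ⟨M, fun w hw hrw => (norm_bdf2Error_le γ w).trans ((le_abs_self _).trans (hM w ⟨hw, hrw⟩))⟩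

theorem exists_norm_bdf2Error_le {γ θ : ℝ} (hγ : γ ∈ Icc 0 2) (hθ0 : 0 < θ)
    (hθ : θ < 3 * π / 4) : ∃ c > 0, ∀ w ∈ Dset 1 θ, ‖bdf2Error γ w‖ ≤ c * ‖w‖ ^ (2 - γ) := by
  obtain ⟨M, hM⟩ := exists_norm_bdf2Error_le_of_le_norm hγ.2 ⟨hθ0, by linarith [Real.pi_pos]⟩
    (by norm_num : (0 : ℝ) < 1 / 4)
  refine ⟨max 9 (16 * M), by positivity, fun w hw => ?_⟩
  rcases le_or_gt ‖w‖ (1 / 4) with hsmall | hbig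
  · have harg : |w.arg| < 3 * π / 4 := by
      rcases hw.2 with ⟨h, -⟩ | ⟨-, h⟩ <;> linarith
    exact (norm_bdf2Error_le_of_norm_le ⟨hγ.1, by linarith [hγ.2]⟩ hw.1 hsmall harg).trans
      (by gcongr; exact le_max_left _ _)
  · have h16 : 1 / 16 ≤ ‖w‖ ^ (2 - γ) := by
      rcases le_or_gt ‖w‖ 1 with hle | hgt
      · calc (1 : ℝ) / 16 ≤ ‖w‖ ^ (2 : ℝ) := by rw [Real.rpow_two]; nlinarith
          _ ≤ ‖w‖ ^ (2 - γ) :=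
            Real.rpow_le_rpow_of_exponent_ge (by linarith) hle (by linarith [hγ.1])
      · linarith [Real.one_le_rpow hgt.le (by linarith [hγ.2] : 0 ≤ 2 - γ)]
    calc ‖bdf2Error γ w‖ ≤ M := hM w hw hbig.le
      _ ≤ 16 * M * ‖w‖ ^ (2 - γ) := by nlinarith [hM w hw hbig.le, norm_nonneg (bdf2Error γ w)]
      _ ≤ max 9 (16 * M) * ‖w‖ ^ (2 - γ) := by gcongr; exact le_max_right _ _

theorem mul_ofReal_mem_Dset_one {τ θ : ℝ} (hτ : 0 < τ) {z : ℂ} (hz : z ∈ Dset τ θ) :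
    z * τ ∈ Dset 1 θ := by
  obtain ⟨hz0, hz⟩ := hz
  refine ⟨mul_ne_zero hz0 (ofReal_ne_zero.2 hτ.ne'), ?_⟩
  rw [arg_mul_real hτ, mul_im, ofReal_re, ofReal_im, mul_zero, zero_add, norm_mul, norm_real,
    Real.norm_of_nonneg hτ.le, abs_mul, abs_of_pos hτ, div_one, div_one]
  rw [le_div_iff₀ hτ, le_div_iff₀ hτ] at hz
  exact hz

theorem bdf2_scaled_error_eq {γ τ : ℝ} (hτ : 0 < τ) (z : ℂ) :
    bdf2 τ (exp (-z * τ)) ^ ((2 - γ : ℝ) : ℂ) * rho1 (exp (-z * τ)) * (τ : ℂ) ^ 2 -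
        z ^ (-(γ : ℂ)) = ((τ ^ γ : ℝ) : ℂ) * bdf2Error γ (z * τ) := by
  have hτ' : 0 ≤ τ⁻¹ := inv_nonneg.2 hτ.le
  have hz : z = ((τ⁻¹ : ℝ) : ℂ) * (z * τ) := by
    rw [mul_left_comm, ofReal_inv, inv_mul_cancel₀ (ofReal_ne_zero.2 hτ.ne'), mul_one]
  have hpow : (τ⁻¹ ^ (2 - γ) : ℝ) * τ ^ 2 = τ ^ γ := by
    rw [Real.inv_rpow hτ.le, ← Real.rpow_neg hτ.le, ← Real.rpow_natCast, ← Real.rpow_add hτ]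
    norm_num
  have hneg : (τ⁻¹ ^ (-γ) : ℝ) = τ ^ γ := by
    rw [Real.inv_rpow hτ.le, ← Real.rpow_neg hτ.le, neg_neg]
  rw [bdf2_eq_inv_mul_bdf2_one, ofReal_mul_cpow hτ', ← ofReal_cpow hτ', neg_mul]
  nth_rewrite 3 [hz]
  rw [ofReal_mul_cpow hτ', ← ofReal_neg, ← ofReal_cpow hτ', hneg, ← hpow, bdf2Error]
  push_cast
  ring

theorem bdf2_rho1_fractional_consistency (γ : ℝ) (hγ : γ ∈ Ioo (0 : ℝ) 1) :
    ∃ θ₀ ∈ Ioo (Real.pi / 2) Real.pi, ∀ θ ∈ Ioo (Real.pi / 2) θ₀,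
      ∃ c > (0 : ℝ),
        ∀ τ : ℝ, 0 < τ → ∀ z ∈ Dset τ θ,
          ‖(bdf2 τ (Complex.exp (-z * τ))) ^ (((2 - γ : ℝ)) : ℂ) *
              rho1 (Complex.exp (-z * τ)) * (τ : ℂ) ^ 2 - z ^ (-(γ : ℂ))‖ ≤
            c * τ ^ 2 * ‖z‖ ^ (2 - γ) := by
  have hπ := Real.pi_pos
  refine ⟨3 * π / 4, ⟨by linarith, by linarith⟩, fun θ hθ => ?_⟩
  obtain ⟨c, hc, hbound⟩ :=
    exists_norm_bdf2Error_le ⟨hγ.1.le, by linarith [hγ.2]⟩ (by linarith [hθ.1]) hθ.2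
  refine ⟨c, hc, fun τ hτ z hz => ?_⟩
  rw [bdf2_scaled_error_eq hτ, norm_mul, norm_real, Real.norm_of_nonneg (by positivity)]
  calc τ ^ γ * ‖bdf2Error γ (z * τ)‖ ≤ τ ^ γ * (c * ‖z * τ‖ ^ (2 - γ)) := by
        gcongr; exact hbound _ (mul_ofReal_mem_Dset_one hτ hz)
    _ = c * (τ ^ γ * τ ^ (2 - γ)) * ‖z‖ ^ (2 - γ) := by
        rw [norm_mul, norm_real, Real.norm_of_nonneg hτ.le, Real.mul_rpow (norm_nonneg z) hτ.le]
        ring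
    _ = c * τ ^ 2 * ‖z‖ ^ (2 - γ) := by
        rw [← Real.rpow_add hτ, add_sub_cancel, Real.rpow_two]
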